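/- arXiv:2510.15932 — 6 statements merged into one kernel-verified Lean document; each statement's English description precedes it below -/
import Mathlib

section
/- Let F be a field of characteristic zero and let A, B ∈ Mₙ(F). Then 𝒞(A) = 𝒞(B) if and only if A and B are polynomially equivalent. -/
/-!
If `𝒞(A) = 𝒞(B)` then `B` lies in the bicommutant of `A`, so it suffices that the bicommutant
of an endomorphism `f` of a finite-dimensional space `V` is `F[f]`. Viewing `V` as a finitely
generated torsion `F[X]`-module, the bicommutant of `f` is the centre of `End_{F[X]} V`. By the
structure theorem `V ≅ ⨁ F[X] ⧸ (pᵢ ^ eᵢ)`; a central endomorphism preserves each summand, where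
it is multiplication by some `rᵢ`, and the maps between summands force `rᵢ ≡ rⱼ mod pⱼ ^ eⱼ`
whenever `pⱼ ^ eⱼ ∣ pᵢ ^ eᵢ`. The Chinese remainder theorem then yields a single `s` with
`s ≡ rᵢ mod pᵢ ^ eᵢ` for all `i`, so the endomorphism is multiplication by `s`.
-/

open Polynomial DirectSum Module

/-- The centralizer of a matrix `A`: all matrices commuting with `A`. -/
def centralizer {n : ℕ} {F : Type*} [Field F] (A : Matrix (Fin n) (Fin n) F) :
    Set (Matrix (Fin n) (Fin n) F) :=
  {X | A * X = X * A}

/-- `A` and `B` are polynomially equivalent: each is a polynomial in the other. -/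
def PolyEquiv {n : ℕ} {F : Type*} [Field F] (A B : Matrix (Fin n) (Fin n) F) : Prop :=
  ∃ f g : Polynomial F, B = Polynomial.aeval A f ∧ A = Polynomial.aeval B g

section PrincipalIdealRing

variable {R : Type*} [CommRing R] [IsPrincipalIdealRing R]

theorem Ideal.isCoprime_span_singleton_pow_of_irreducible {p q : R} (hp : Irreducible p)
    (hq : Irreducible q) (hpq : Ideal.span {p} ≠ Ideal.span {q}) (a b : ℕ) :
    IsCoprime (Ideal.span {p ^ a}) (Ideal.span {q ^ b}) := by
  rw [← Ideal.span_singleton_pow, ← Ideal.span_singleton_pow]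
  refine .pow (Ideal.isCoprime_iff_sup_eq.mpr ?_)
  exact (PrincipalIdealRing.isMaximal_of_irreducible hp).coprime_of_ne
    (PrincipalIdealRing.isMaximal_of_irreducible hq) hpq

theorem exists_forall_pow_dvd_sub [IsDomain R] {ι : Type*} [Fintype ι] {p : ι → R}
    (hp : ∀ i, Irreducible (p i)) (e : ι → ℕ) (r : ι → R)
    (hr : ∀ i j, p j ^ e j ∣ p i ^ e i → p j ^ e j ∣ r i - r j) :
    ∃ s : R, ∀ i, p i ^ e i ∣ s - r i := by
  classical
  -- at each prime ideal, the congruence of largest exponent implies the others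
  have hmax (P : Set.range fun i => Ideal.span {p i}) : ∃ i, Ideal.span {p i} = P ∧
      ∀ j, Ideal.span {p j} = P → e j ≤ e i := by
    obtain ⟨i₀, hi₀⟩ := P.2
    obtain ⟨i, hi, hle⟩ := Finset.exists_max_image
      {i | Ideal.span {p i} = P} e ⟨i₀, by simpa using hi₀⟩
    exact ⟨i, (Finset.mem_filter.mp hi).2, fun j hj => hle j (by simpa using hj)⟩
  choose m hm hle using hmax
  obtain ⟨s, hs⟩ := Ideal.exists_forall_sub_mem_ideal
    (I := fun P => Ideal.span {p (m P) ^ e (m P)}) (fun P P' hne =>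
      Ideal.isCoprime_span_singleton_pow_of_irreducible (hp _) (hp _)
        (by rw [hm, hm]; exact fun h => hne (Subtype.ext h)) _ _) (fun P => r (m P))
  refine ⟨s, fun i => ?_⟩
  set P : Set.range fun i => Ideal.span {p i} := ⟨_, i, rfl⟩
  have hdvd : p i ^ e i ∣ p (m P) ^ e (m P) :=
    (pow_dvd_pow_of_dvd (Ideal.span_singleton_eq_span_singleton.mp (hm P)).symm.dvd _).trans
      (pow_dvd_pow _ (hle P i rfl))
  simpa using (hdvd.trans (Ideal.mem_span_singleton.mp (hs P))).add (hr (m P) i hdvd)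

end PrincipalIdealRing

namespace DirectSum

variable {R : Type*} [CommRing R] {ι : Type*} [DecidableEq ι] {I : ι → Ideal R}

theorem linearMap_ext_lof_one {N : Type*} [AddCommGroup N] [Module R N]
    ⦃f g : (⨁ i, R ⧸ I i) →ₗ[R] N⦄ (h : ∀ i, f (lof R ι _ i 1) = g (lof R ι _ i 1)) : f = g :=
  linearMap_ext R fun i => Submodule.linearMap_qext _ (LinearMap.ext_ring (h i))

theorem smul_lof_one (a : R) (i : ι) :
    a • lof R ι (fun i => R ⧸ I i) i 1 = lof R ι _ i (Ideal.Quotient.mk (I i) a) := by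
  rw [← map_smul, Algebra.smul_def, mul_one, Ideal.Quotient.algebraMap_eq]

theorem smul_lof_one_eq_smul_lof_one_iff {a b : R} {i : ι} :
    a • lof R ι (fun i => R ⧸ I i) i 1 = b • lof R ι _ i 1 ↔ a - b ∈ I i := by
  rw [smul_lof_one, smul_lof_one, lof_eq_of, lof_eq_of, (of_injective i).eq_iff,
    Ideal.Quotient.eq]

variable {T : Module.End R (⨁ i, R ⧸ I i)}

theorem exists_apply_lof_one_eq_smul (hT : ∀ h, Commute T h) (i : ι) :
    ∃ r : R, T (lof R ι _ i 1) = r • lof R ι _ i 1 := by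
  set P : Module.End R (⨁ i, R ⧸ I i) := lof R ι _ i ∘ₗ component R ι _ i
  obtain ⟨r, hr⟩ := Ideal.Quotient.mk_surjective (component R ι _ i (T (lof R ι _ i 1)))
  refine ⟨r, ?_⟩
  calc T (lof R ι _ i 1) = T (P (lof R ι _ i 1)) := by simp [P]
    _ = P (T (lof R ι _ i 1)) := LinearMap.congr_fun (hT P) _
    _ = r • lof R ι _ i 1 := by rw [smul_lof_one, hr]; rfl

theorem sub_mem_of_forall_commute (hT : ∀ h, Commute T h) {r : ι → R}
    (hr : ∀ i, T (lof R ι _ i 1) = r i • lof R ι _ i 1) {i j : ι} (hij : I i ≤ I j) :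
    r i - r j ∈ I j := by
  set h : Module.End R (⨁ i, R ⧸ I i) :=
    lof R ι _ j ∘ₗ Submodule.factor hij ∘ₗ component R ι _ i
  have hu : h (lof R ι _ i 1) = lof R ι _ j 1 := by simp [h]
  have hTh := LinearMap.congr_fun (hT h) (lof R ι _ i 1)
  simp only [Module.End.mul_apply, hu, hr, map_smul] at hTh
  exact smul_lof_one_eq_smul_lof_one_iff.mp hTh.symm

theorem exists_algebraMap_eq_of_forall_commute [IsDomain R] [IsPrincipalIdealRing R]
    [Fintype ι] {p : ι → R} (hp : ∀ i, Irreducible (p i)) (e : ι → ℕ)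
    {T : Module.End R (⨁ i, R ⧸ Ideal.span {p i ^ e i})} (hT : ∀ h, Commute T h) :
    ∃ s : R, algebraMap R _ s = T := by
  choose r hr using exists_apply_lof_one_eq_smul hT
  obtain ⟨s, hs⟩ := exists_forall_pow_dvd_sub hp e r fun i j hji =>
    Ideal.mem_span_singleton.mp <| sub_mem_of_forall_commute hT hr <|
      Ideal.span_singleton_le_span_singleton.mpr hji
  refine ⟨s, linearMap_ext_lof_one fun i => ?_⟩
  rw [Module.algebraMap_end_apply, hr, smul_lof_one_eq_smul_lof_one_iff]
  exact Ideal.mem_span_singleton.mpr (hs i)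

end DirectSum

theorem Module.IsTorsion.exists_algebraMap_eq_of_forall_commute {R M : Type*} [CommRing R]
    [IsDomain R] [IsPrincipalIdealRing R] [AddCommGroup M] [Module R M] [Module.Finite R M]
    (hM : Module.IsTorsion R M) {T : Module.End R M} (hT : ∀ h, Commute T h) :
    ∃ s : R, algebraMap R _ s = T := by
  classical
  obtain ⟨ι, _, p, hp, e, ⟨E⟩⟩ := Module.equiv_directSum_of_isTorsion hM
  set Φ := E.conjAlgEquiv R
  obtain ⟨s, hs⟩ := DirectSum.exists_algebraMap_eq_of_forall_commute hp e (T := Φ T)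
    fun h => by simpa using (hT (Φ.symm h)).map Φ
  exact ⟨s, Φ.injective (by rw [AlgEquiv.commutes, hs])⟩

theorem Module.End.exists_aeval_eq_of_forall_commute {K V : Type*} [Field K] [AddCommGroup V]
    [Module K V] [FiniteDimensional K V] {f g : Module.End K V}
    (hg : ∀ h, Commute f h → Commute g h) : ∃ p : K[X], aeval f p = g := by
  set G : Module.End K[X] (AEval' f) := LinearMap.ofAEval f ((AEval'.of f).toLinearMap ∘ₗ g)
    fun m => by simp [AEval'.X_smul_of, ← Module.End.mul_apply, (hg f rfl).eq]
  have hG (h : Module.End K[X] (AEval' f)) : Commute G h := by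
    set h' : Module.End K V := (AEval'.of f).symm.conj (h.restrictScalars K)
    have hfh' : Commute f h' := LinearMap.ext fun m => by
      change f ((AEval'.of f).symm (h (AEval'.of f m))) =
        (AEval'.of f).symm (h (AEval'.of f (f m)))
      rw [← AEval'.of_symm_X_smul, ← map_smul, AEval'.X_smul_of]
    exact LinearMap.ext fun m => LinearMap.congr_fun (hg h' hfh') m
  obtain ⟨s, hs⟩ :=
    (AEval.isTorsion_of_finiteDimensional K V f).exists_algebraMap_eq_of_forall_commute hG
  exact ⟨s, LinearMap.ext fun m => LinearMap.congr_fun hs (AEval'.of f m)⟩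

theorem Matrix.exists_aeval_eq_of_forall_commute {K n : Type*} [Field K] [Fintype n]
    [DecidableEq n] {A B : Matrix n n K} (hB : ∀ X, Commute A X → Commute B X) :
    ∃ p : K[X], aeval A p = B := by
  set Φ : Matrix n n K ≃ₐ[K] Module.End K (n → K) := Matrix.toLinAlgEquiv'
  obtain ⟨p, hp⟩ := Module.End.exists_aeval_eq_of_forall_commute (f := Φ A) (g := Φ B)
    fun h hh => by simpa using (hB (Φ.symm h) (by simpa using hh.map Φ.symm)).map Φ
  exact ⟨p, Φ.injective (by rw [← hp, aeval_algHom_apply])⟩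

section Centralizer

variable {n : ℕ} {F : Type*} [Field F]

theorem centralizer_subset_centralizer_aeval (A : Matrix (Fin n) (Fin n) F) (p : F[X]) :
    centralizer A ⊆ centralizer (aeval A p) := fun _ hX =>
  (Algebra.commute_of_mem_adjoin_singleton_of_commute (aeval_mem_adjoin_singleton F A)
    (show Commute A _ from hX).symm).symm

theorem exists_aeval_eq_of_centralizer_subset {A B : Matrix (Fin n) (Fin n) F}
    (h : centralizer A ⊆ centralizer B) : ∃ p : F[X], aeval A p = B :=
  Matrix.exists_aeval_eq_of_forall_commute fun _ hX => h hX

end Centralizer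

theorem centralizer_eq_iff_polyEquiv_general {n : ℕ} {F : Type*} [Field F]
    (A B : Matrix (Fin n) (Fin n) F) :
    centralizer A = centralizer B ↔ PolyEquiv A B := by
  constructor
  · intro h
    obtain ⟨f, hf⟩ := exists_aeval_eq_of_centralizer_subset h.subset
    obtain ⟨g, hg⟩ := exists_aeval_eq_of_centralizer_subset h.symm.subset
    exact ⟨f, g, hf.symm, hg.symm⟩
  · rintro ⟨f, g, hB, hA⟩
    have hAB := centralizer_subset_centralizer_aeval A f
    have hBA := centralizer_subset_centralizer_aeval B g
    rw [← hB] at hAB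
    rw [← hA] at hBA
    exact hAB.antisymm hBA

theorem centralizer_eq_iff_polyEquiv {n : ℕ} {F : Type*} [Field F] [CharZero F]
    (A B : Matrix (Fin n) (Fin n) F) :
    centralizer A = centralizer B ↔ PolyEquiv A B :=
  centralizer_eq_iff_polyEquiv_general A B
end

section
/- Let q be a positive integer, let ω ∈ ℂ be a primitive q-th root of unity, and let A, B ∈ Mₙ(ℂ) satisfy AB = ω·BA. Then (A + B)^q = A^q + B^q. -/
/-!
If `a * b = ω • (b * a)`, expanding `(a + b) ^ m` and moving every `b` to the left yields the
Gaussian binomial expansion `∑ₖ [m choose k]_ω • b ^ k * a ^ (m - k)`. The Gaussian binomials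
satisfy `(ω ^ (k + 1) - 1) [m choose k+1]_ω = (ω ^ (m - k) - 1) [m choose k]_ω`; for `m = q` and
`ω` a primitive `q`-th root of unity the right-hand side vanishes at `k = 0` while the factor
`ω ^ (k + 1) - 1` on the left is nonzero for `k + 1 < q`, so all middle coefficients vanish.
-/

open Finset

section QChoose

variable {R : Type*}

/-- The Gaussian binomial coefficient `[m choose k]_ω`. -/
def qChoose [CommSemiring R] (ω : R) : ℕ → ℕ → R
  | _, 0 => 1
  | 0, _ + 1 => 0
  | m + 1, k + 1 => ω ^ (k + 1) * qChoose ω m (k + 1) + qChoose ω m k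

section Semiring

variable [CommSemiring R] (ω : R)

@[simp]
theorem qChoose_zero_right (m : ℕ) : qChoose ω m 0 = 1 := by
  cases m <;> rfl

theorem qChoose_succ_succ (m k : ℕ) :
    qChoose ω (m + 1) (k + 1) = ω ^ (k + 1) * qChoose ω m (k + 1) + qChoose ω m k :=
  rfl

theorem qChoose_eq_zero_of_lt : ∀ {m k : ℕ}, m < k → qChoose ω m k = 0
  | 0, _ + 1, _ => rfl
  | m + 1, k + 1, hk => by
    rw [qChoose_succ_succ, qChoose_eq_zero_of_lt (by omega), qChoose_eq_zero_of_lt (by omega),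
      mul_zero, add_zero]

@[simp]
theorem qChoose_self : ∀ m : ℕ, qChoose ω m m = 1
  | 0 => rfl
  | m + 1 => by
    rw [qChoose_succ_succ, qChoose_eq_zero_of_lt ω m.lt_succ_self, qChoose_self m, mul_zero,
      zero_add]

end Semiring

section Ring

variable [CommRing R] (ω : R)

theorem sub_one_mul_qChoose_succ :
    ∀ m k : ℕ, (ω ^ (k + 1) - 1) * qChoose ω m (k + 1) = (ω ^ (m - k) - 1) * qChoose ω m k
  | 0, k => by simp [qChoose_eq_zero_of_lt ω k.succ_pos]
  | m + 1, 0 => by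
    have ih := sub_one_mul_qChoose_succ m 0
    simp only [zero_add, pow_one, Nat.sub_zero, qChoose_zero_right, mul_one] at ih ⊢
    rw [qChoose_succ_succ, qChoose_zero_right]
    linear_combination ω * ih
  | m + 1, k + 1 => by
    rw [qChoose_succ_succ, qChoose_succ_succ]
    obtain hkm | hmk := lt_or_ge k m
    · obtain ⟨d, rfl⟩ : ∃ d, m = k + d + 1 := ⟨m - k - 1, by omega⟩
      have ih₁ := sub_one_mul_qChoose_succ (k + d + 1) (k + 1)
      have ih₀ := sub_one_mul_qChoose_succ (k + d + 1) k
      rw [show k + d + 1 - (k + 1) = d by omega] at ih₁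
      rw [show k + d + 1 - k = d + 1 by omega] at ih₀
      rw [show k + d + 1 + 1 - (k + 1) = d + 1 by omega]
      linear_combination ω ^ (k + 2) * ih₁ + ih₀
    · rw [qChoose_eq_zero_of_lt ω (by omega : m < k + 1),
        qChoose_eq_zero_of_lt ω (by omega : m < k + 1 + 1), show m + 1 - (k + 1) = 0 by omega,
        pow_zero, sub_self, zero_mul, mul_zero, add_zero, mul_zero]

theorem qChoose_eq_zero_of_isPrimitiveRoot [IsDomain R] {q : ℕ} (hω : IsPrimitiveRoot ω q)
    {k : ℕ} (hk₀ : 0 < k) (hkq : k < q) : qChoose ω q k = 0 := by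
  induction k with
  | zero => omega
  | succ k ih =>
    have hne : ω ^ (k + 1) - 1 ≠ 0 :=
      sub_ne_zero.mpr (hω.pow_ne_one_of_pos_of_lt k.succ_ne_zero hkq)
    have hrel := sub_one_mul_qChoose_succ ω q k
    -- for `k = 0` the right-hand side has the factor `ω ^ q - 1`, otherwise `[q choose k]_ω`
    have hrhs : (ω ^ (q - k) - 1) * qChoose ω q k = 0 := by
      rcases Nat.eq_zero_or_pos k with rfl | hk
      · rw [Nat.sub_zero, hω.pow_eq_one, sub_self, zero_mul]
      · rw [ih hk (by omega), mul_zero]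
    exact (mul_eq_zero.mp (hrel.trans hrhs)).resolve_left hne

end Ring

end QChoose

section QCommuting

variable {R A : Type*} [CommSemiring R] [Semiring A] [Algebra R A] {ω : R} {a b : A}

theorem mul_pow_eq_smul_pow_mul (h : a * b = ω • (b * a)) (k : ℕ) :
    a * b ^ k = ω ^ k • (b ^ k * a) := by
  induction k with
  | zero => simp
  | succ k ih =>
    rw [pow_succ, ← mul_assoc, ih, smul_mul_assoc, mul_assoc, h, mul_smul_comm, smul_smul,
      ← mul_assoc, ← pow_succ, ← pow_succ]

theorem add_pow_eq_sum_qChoose (h : a * b = ω • (b * a)) (m : ℕ) :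
    (a + b) ^ m = ∑ k ∈ range (m + 1), qChoose ω m k • (b ^ k * a ^ (m - k)) := by
  induction m with
  | zero => simp
  | succ m ih =>
    have ha : ∀ k ∈ range (m + 1), a * (qChoose ω m k • (b ^ k * a ^ (m - k)))
        = (ω ^ k * qChoose ω m k) • (b ^ k * a ^ (m + 1 - k)) := by
      intro k hk
      rw [Nat.sub_add_comm (Nat.lt_succ_iff.mp (mem_range.mp hk)), pow_succ', mul_smul_comm,
        ← mul_assoc, mul_pow_eq_smul_pow_mul h, smul_mul_assoc, smul_smul, mul_assoc, mul_comm]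
    have hb : ∀ k ∈ range (m + 1), b * (qChoose ω m k • (b ^ k * a ^ (m - k)))
        = qChoose ω m k • (b ^ (k + 1) * a ^ (m - k)) := by
      intro k _
      rw [mul_smul_comm, ← mul_assoc, ← pow_succ']
    rw [pow_succ', add_mul, ih, mul_sum, mul_sum, sum_congr rfl ha, sum_congr rfl hb,
      sum_range_succ' _ (m + 1), sum_range_succ' (fun k ↦ (ω ^ k * _) • _) m]
    simp only [qChoose_succ_succ, qChoose_zero_right, pow_zero, one_mul, Nat.sub_zero,
      Nat.succ_sub_succ, add_smul, sum_add_distrib]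
    rw [sum_range_succ (fun k ↦ (ω ^ (k + 1) * _) • _) m, qChoose_eq_zero_of_lt ω m.lt_succ_self,
      mul_zero, zero_smul, add_zero]
    abel

end QCommuting

theorem add_pow_eq_pow_add_pow_of_isPrimitiveRoot {R A : Type*} [CommRing R] [IsDomain R]
    [Semiring A] [Algebra R A] {ω : R} {a b : A} {q : ℕ} (hq : 0 < q) (hω : IsPrimitiveRoot ω q)
    (h : a * b = ω • (b * a)) : (a + b) ^ q = a ^ q + b ^ q := by
  rw [add_pow_eq_sum_qChoose h, sum_range_succ, qChoose_self, Nat.sub_self, pow_zero, mul_one,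
    one_smul, sum_eq_single_of_mem 0 (mem_range.mpr hq), qChoose_zero_right, one_smul, pow_zero,
    one_mul, Nat.sub_zero]
  intro k hk hk₀
  rw [qChoose_eq_zero_of_isPrimitiveRoot ω hω (Nat.pos_of_ne_zero hk₀) (mem_range.mp hk),
    zero_smul]

theorem potter {n q : ℕ} (hq : 0 < q) (ω : ℂ)
    (hω : ω ^ q = 1) (hω' : ∀ k : ℕ, 1 ≤ k → k < q → ω ^ k ≠ 1)
    (A B : Matrix (Fin n) (Fin n) ℂ) (h : A * B = ω • (B * A)) :
    (A + B) ^ q = A ^ q + B ^ q :=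
  add_pow_eq_pow_add_pow_of_isPrimitiveRoot hq
    (IsPrimitiveRoot.mk_of_lt ω hq hω hω') h
end

section
/- Let F be a field of characteristic zero and let A, B ∈ Mₙ(F). If 𝒞𝓛(A) = 𝒞𝓛(B) and A has 0 as an eigenvalue (equivalently, det A = 0), then B also has 0 as an eigenvalue (equivalently, det B = 0). -/
/-!
If `det A = 0`, every rank-one matrix `v wᵀ` with `A v = 0` and `wᵀ A = 0` anticommutes with `A`,
hence with `B`; this makes every vector of `ker A` an eigenvector of `B`, so `B` acts on `ker A`
as a scalar `c`. A matrix `X` anticommuting with `A` maps `ker A` into itself and anticommutes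
with `B`, so `c • X v = -c • X v` for `v ∈ ker A`. Conversely, every `0 ≠ v ∈ ker A` is moved by
some `X ∈ 𝒞𝓛(A)`: by Fitting's lemma `v = Aᵏ u` with `v ∉ range Aᵏ⁺¹`, so some `w` has
`wᵀ Aᵏ⁺¹ = 0` and `w ⬝ v ≠ 0`, and `X = ∑ᵢ (-1)ⁱ (Aⁱ u)(wᵀ Aᵏ⁻ⁱ)` works. Hence `c = 0` and `B` is
singular.
-/

open Matrix

/-- The clifforder of a matrix `A`: all matrices anti-commuting with `A`. -/
def clifforder {n : ℕ} {F : Type*} [Field F] (A : Matrix (Fin n) (Fin n) F) :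
    Set (Matrix (Fin n) (Fin n) F) :=
  {X | A * X = -(X * A)}

theorem Module.End.exists_forall_mem_apply_eq_smul {K V : Type*} [Field K] [AddCommGroup V]
    [Module K V] (f : Module.End K V) (p : Submodule K V)
    (h : ∀ v ∈ p, ∃ c : K, f v = c • v) : ∃ c : K, ∀ v ∈ p, f v = c • v := by
  have hp : ∀ v ∈ p, f v ∈ p := fun v hv ↦ by
    obtain ⟨c, hc⟩ := h v hv
    exact hc ▸ p.smul_mem c hv
  obtain ⟨c, hc⟩ := (f.restrict hp).exists_eq_smul_id_of_forall_notLinearIndependent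
    fun v hli ↦ by
      obtain ⟨c, hc⟩ := h v v.2
      have hv : f.restrict hp v = c • v := Subtype.ext hc
      have := LinearIndependent.pair_iff.mp hli c (-1) (by rw [hv]; simp)
      simp at this
  exact ⟨c, fun v hv ↦ congrArg Subtype.val (LinearMap.congr_fun hc ⟨v, hv⟩)⟩

theorem Module.End.eq_zero_of_mem_ker_of_forall_mem_range_pow {R M : Type*} [Ring R]
    [AddCommGroup M] [Module R M] [IsNoetherian R M] (f : Module.End R M) {v : M}
    (hv : f v = 0) (h : ∀ k, v ∈ LinearMap.range (f ^ k)) : v = 0 := by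
  obtain ⟨k, hk⟩ :=
    (f.eventually_disjoint_ker_pow_range_pow.and (Filter.eventually_ge_atTop 1)).exists
  refine Submodule.disjoint_def.mp hk.1 v ?_ (h k)
  obtain ⟨j, rfl⟩ := Nat.exists_eq_add_of_le' hk.2
  rw [LinearMap.mem_ker, pow_succ, Module.End.mul_apply, hv, map_zero]

section

variable {m K : Type*} [Fintype m] [DecidableEq m] [Field K]

theorem Matrix.exists_vecMul_eq_zero_dotProduct_ne_zero {M : Matrix m m K} {v : m → K}
    (hv : ∀ x, M *ᵥ x ≠ v) : ∃ w, w ᵥ* M = 0 ∧ w ⬝ᵥ v ≠ 0 := by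
  have hv' : v ∉ LinearMap.range M.mulVecLin := by simpa using hv
  obtain ⟨f, hfv, hf⟩ := Submodule.exists_dual_map_eq_bot_of_notMem hv' inferInstance
  have hw : ∀ y, (dotProductEquiv K m).symm f ⬝ᵥ y = f y := fun y ↦
    LinearMap.congr_fun ((dotProductEquiv K m).apply_symm_apply f) y
  refine ⟨(dotProductEquiv K m).symm f, dotProduct_eq_zero _ fun x ↦ ?_, by rwa [hw]⟩
  rw [← dotProduct_mulVec, hw]
  exact (Submodule.eq_bot_iff _).mp hf _ (Submodule.mem_map_of_mem ⟨x, rfl⟩)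

theorem Matrix.exists_pow_mulVec_eq_forall_pow_succ_mulVec_ne {A : Matrix m m K} {v : m → K}
    (hv : A *ᵥ v = 0) (hv0 : v ≠ 0) :
    ∃ k u, A ^ k *ᵥ u = v ∧ ∀ x, A ^ (k + 1) *ᵥ x ≠ v := by
  by_contra! h
  refine hv0 (Module.End.eq_zero_of_mem_ker_of_forall_mem_range_pow (toLin' A)
    (by simpa using hv) fun k ↦ ?_)
  suffices ∃ u, A ^ k *ᵥ u = v by simpa [← toLin'_pow] using this
  induction k with
  | zero => exact ⟨v, by simp⟩
  | succ k ih => exact h k _ ih.choose_spec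

end

section

variable {n : ℕ} {F : Type*} [Field F]

theorem mem_clifforder_iff {A X : Matrix (Fin n) (Fin n) F} :
    X ∈ clifforder A ↔ A * X + X * A = 0 :=
  eq_neg_iff_add_eq_zero

theorem vecMulVec_mem_clifforder {A : Matrix (Fin n) (Fin n) F} {v w : Fin n → F}
    (hv : A *ᵥ v = 0) (hw : w ᵥ* A = 0) : vecMulVec v w ∈ clifforder A := by
  simp [mem_clifforder_iff, mul_vecMulVec, vecMulVec_mul, hv, hw]

theorem mulVec_mulVec_eq_neg_smul_of_mem_clifforder {A X : Matrix (Fin n) (Fin n) F}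
    {v : Fin n → F} {c : F} (hX : X ∈ clifforder A) (hv : A *ᵥ v = c • v) :
    A *ᵥ (X *ᵥ v) = -c • (X *ᵥ v) := by
  have hX' : A * X = -(X * A) := hX
  rw [mulVec_mulVec, hX', neg_mulVec, ← mulVec_mulVec, hv, mulVec_smul, neg_smul]

theorem exists_mulVec_eq_smul_of_vecMulVec_mem_clifforder {A : Matrix (Fin n) (Fin n) F}
    {v w : Fin n → F} (hw : w ≠ 0) (h : vecMulVec v w ∈ clifforder A) :
    ∃ c : F, A *ᵥ v = c • v := by
  obtain ⟨j, hj⟩ : ∃ j, w j ≠ 0 := Function.ne_iff.mp hw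
  have h' : vecMulVec (A *ᵥ v) w = -vecMulVec v (w ᵥ* A) := by
    rw [← mul_vecMulVec, ← vecMulVec_mul]; exact h
  refine ⟨-(w ᵥ* A) j / w j, funext fun i ↦ ?_⟩
  have hij := congrFun (congrFun h' i) j
  simp only [vecMulVec_apply, Matrix.neg_apply] at hij
  simp only [Pi.smul_apply, smul_eq_mul]
  field_simp
  linear_combination hij

theorem exists_forall_mulVec_eq_smul_of_clifforder_subset {A B : Matrix (Fin n) (Fin n) F}
    (h : clifforder A ⊆ clifforder B) (hA : A.det = 0) :
    ∃ c : F, ∀ v, A *ᵥ v = 0 → B *ᵥ v = c • v := by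
  obtain ⟨w, hw0, hw⟩ := exists_vecMul_eq_zero_iff.mpr hA
  simpa using Module.End.exists_forall_mem_apply_eq_smul (toLin' B) (LinearMap.ker (toLin' A))
    fun v hv ↦ by
      simpa using exists_mulVec_eq_smul_of_vecMulVec_mem_clifforder hw0
        (h (vecMulVec_mem_clifforder (by simpa using hv) hw))

end

section

variable {m R : Type*} [Fintype m] [DecidableEq m] [CommRing R]

/-- `∑ i ∈ range (k + 1), (-1) ^ i • vecMulVec (A ^ i *ᵥ u) (w ᵥ* A ^ (k - i))`, written as a
recursion on `k`; its anticommutator with `A` telescopes. -/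
def Matrix.alternatingVecMulVec (A : Matrix m m R) (u w : m → R) : ℕ → Matrix m m R
  | 0 => vecMulVec u w
  | k + 1 => vecMulVec u (w ᵥ* A ^ (k + 1)) - A * A.alternatingVecMulVec u w k

theorem Matrix.mul_alternatingVecMulVec_add (A : Matrix m m R) (u w : m → R) (k : ℕ) :
    A * A.alternatingVecMulVec u w k + A.alternatingVecMulVec u w k * A =
      vecMulVec u (w ᵥ* A ^ (k + 1)) + (-1 : R) ^ k • vecMulVec (A ^ (k + 1) *ᵥ u) w := by
  induction k with
  | zero => simp [alternatingVecMulVec, mul_vecMulVec, vecMulVec_mul, add_comm]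
  | succ k ih =>
    set X := A.alternatingVecMulVec u w k
    set P := vecMulVec u (w ᵥ* A ^ (k + 1)) with hP
    calc A * (P - A * X) + (P - A * X) * A = A * P + P * A - A * (A * X + X * A) := by
          noncomm_ring
      _ = _ := by
        simp only [ih, hP, mul_add, Matrix.mul_smul, mul_vecMulVec, vecMulVec_mul, vecMul_vecMul,
          mulVec_mulVec, ← pow_succ, ← pow_succ']
        rw [pow_succ (-1 : R), mul_neg_one, neg_smul]
        abel

theorem Matrix.alternatingVecMulVec_mulVec (A : Matrix m m R) (u w : m → R) (k : ℕ)
    {v : m → R} (hv : A *ᵥ v = 0) :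
    A.alternatingVecMulVec u w k *ᵥ v = ((-1) ^ k * (w ⬝ᵥ v)) • (A ^ k *ᵥ u) := by
  induction k with
  | zero => simp [alternatingVecMulVec, vecMulVec_mulVec, mul_comm]
  | succ k ih =>
    rw [alternatingVecMulVec, sub_mulVec, vecMulVec_mulVec, pow_succ, ← vecMul_vecMul,
      ← dotProduct_mulVec, hv, dotProduct_zero, ← mulVec_mulVec, ih, mulVec_smul,
      mulVec_mulVec, ← pow_succ']
    simp [pow_succ]

end

theorem exists_mem_clifforder_mulVec_ne_zero {n : ℕ} {F : Type*} [Field F]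
    {A : Matrix (Fin n) (Fin n) F} {v : Fin n → F} (hv : A *ᵥ v = 0) (hv0 : v ≠ 0) :
    ∃ X ∈ clifforder A, X *ᵥ v ≠ 0 := by
  obtain ⟨k, u, rfl, hu⟩ := exists_pow_mulVec_eq_forall_pow_succ_mulVec_ne hv hv0
  obtain ⟨w, hw, hwv⟩ := exists_vecMul_eq_zero_dotProduct_ne_zero hu
  refine ⟨A.alternatingVecMulVec u w k, ?_, ?_⟩
  · rw [mem_clifforder_iff, mul_alternatingVecMulVec_add, hw, pow_succ', ← mulVec_mulVec, hv]
    simp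
  · rw [alternatingVecMulVec_mulVec A u w k hv]
    exact smul_ne_zero (mul_ne_zero (pow_ne_zero k (neg_ne_zero.mpr one_ne_zero)) hwv) hv0

theorem det_eq_zero_of_clifforder_eq {n : ℕ} {F : Type*} [Field F] [CharZero F]
    (A B : Matrix (Fin n) (Fin n) F)
    (h : clifforder A = clifforder B) (hA : A.det = 0) :
    B.det = 0 := by
  obtain ⟨c, hc⟩ := exists_forall_mulVec_eq_smul_of_clifforder_subset h.subset hA
  obtain ⟨v, hv0, hv⟩ := exists_mulVec_eq_zero_iff.mpr hA
  obtain ⟨X, hXA, hXv⟩ := exists_mem_clifforder_mulVec_ne_zero hv hv0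
  have hAXv : A *ᵥ (X *ᵥ v) = 0 := by
    simpa using mulVec_mulVec_eq_neg_smul_of_mem_clifforder hXA (c := 0) (by simpa using hv)
  have hBXv : B *ᵥ (X *ᵥ v) = -c • (X *ᵥ v) :=
    mulVec_mulVec_eq_neg_smul_of_mem_clifforder (h ▸ hXA) (hc v hv)
  have hc0 : c = 0 := by
    simpa [hXv, eq_neg_iff_add_eq_zero, ← add_smul] using (hc _ hAXv).symm.trans hBXv
  exact exists_mulVec_eq_zero_iff.mp ⟨v, hv0, by simpa [hc0] using hc v hv⟩
end

section
/- Let F be a field of characteristic zero, let A = Jₙ(0), let B ∈ Mₙ(F), and let k ≥ 2 be an integer. If every X ∈ Mₙ(F) satisfying Σ_{i=0}^{k} C(k,i) A^{k−i} X A^{i} = 0 also satisfies Σ_{i=0}^{k} C(k,i) X^{k−i} B X^{i} = 0, then B = 0. -/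
/-!
Test the hypothesis on a diagonal `X = diag(d₀, …, dₙ₋₁)`. The Jordan-side sum of `X` lives on the
`k`-th superdiagonal, with entries `∑ᵢ C(k,i) d_{a+i}`; for `d_j = (-1)ʲ (2j + 1)` these are, up to
sign, `k`-th forward differences of the affine function `2j + 1`, hence vanish because `k ≥ 2`.
The other sum is then the entrywise product of `B` with `((d_a + d_b)ᵏ)_{a,b}`, and `d_a + d_b` is
never zero (compare parities of `a` and `b`), so `B = 0`.
-/

def jordanBlock (n : ℕ) (F : Type*) [Field F] : Matrix (Fin n) (Fin n) F :=
  Matrix.of fun i j => if (i : ℕ) + 1 = (j : ℕ) then 1 else 0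

open Finset Matrix Polynomial

theorem Fin.sum_ite_val_eq {M : Type*} [AddCommMonoid M] {n : ℕ} (a : ℕ) (g : Fin n → M) :
    ∑ c : Fin n, (if a = (c : ℕ) then g c else 0) = if h : a < n then g ⟨a, h⟩ else 0 := by
  split_ifs with h
  · rw [sum_eq_single ⟨a, h⟩ (fun c _ hc => if_neg fun hac => hc (Fin.ext hac.symm))
      (fun h' => absurd (mem_univ _) h'), if_pos rfl]
  · exact sum_eq_zero fun c _ => if_neg fun hac => h (by omega)

theorem sum_choose_smul_diagonal_pow_mul_mul_diagonal_pow_apply {ι R : Type*} [Fintype ι]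
    [DecidableEq ι] [CommSemiring R] (d e : ι → R) (B : Matrix ι ι R) (k : ℕ) (a b : ι) :
    (∑ i ∈ range (k + 1), (k.choose i : R) • (diagonal d ^ (k - i) * B * diagonal e ^ i)) a b =
      (d a + e b) ^ k * B a b := by
  simp only [Matrix.sum_apply, Matrix.smul_apply, diagonal_pow, diagonal_mul, mul_diagonal,
    Pi.pow_apply, smul_eq_mul]
  rw [add_comm (d a), add_pow, sum_mul]
  exact sum_congr rfl fun i _ => by ring

theorem sum_neg_one_pow_mul_choose_mul_eval_eq_zero {R : Type*} [CommRing R] {P : R[X]} {k : ℕ}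
    (hP : P.natDegree < k) (y : R) :
    ∑ i ∈ range (k + 1), (-1) ^ i * (k.choose i : R) * P.eval (y + i) = 0 := by
  have hsign : ∀ i ∈ range (k + 1), ((-1) ^ i : R) = (-1) ^ k * (-1) ^ (k - i) := fun i hi => by
    rw [← pow_add, show k + (k - i) = i + 2 * (k - i) by grind, pow_add, pow_mul, neg_one_sq,
      one_pow, mul_one]
  calc _ = (-1) ^ k * (fwdDiff 1)^[k] P.eval y := by
        rw [fwdDiff_iter_eq_sum_shift, mul_sum]
        refine sum_congr rfl fun i hi => ?_
        rw [hsign i hi, nsmul_one, zsmul_eq_mul]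
        push_cast
        ring
    _ = 0 := by rw [fwdDiff_iter_eq_zero_of_degree_lt hP, Pi.zero_apply, mul_zero]

def signedOdd (j : ℕ) : ℤ := (-1) ^ j * (2 * j + 1)

theorem sum_choose_mul_signedOdd_add {k : ℕ} (hk : 2 ≤ k) (a : ℕ) :
    ∑ i ∈ range (k + 1), (k.choose i : ℤ) * signedOdd (a + i) = 0 := by
  have h := sum_neg_one_pow_mul_choose_mul_eval_eq_zero
    (P := C 2 * X + C 1) (natDegree_linear_le.trans_lt hk) (a : ℤ)
  rw [← mul_eq_zero_of_right ((-1) ^ a) h, mul_sum]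
  refine sum_congr rfl fun i _ => ?_
  simp only [signedOdd, eval_add, eval_mul, eval_C, eval_X, pow_add]
  push_cast
  ring

theorem signedOdd_add_signedOdd_ne_zero (a b : ℕ) : signedOdd a + signedOdd b ≠ 0 := by
  rcases Nat.even_or_odd a with ⟨r, rfl⟩ | ⟨r, rfl⟩ <;>
    rcases Nat.even_or_odd b with ⟨s, rfl⟩ | ⟨s, rfl⟩ <;>
    simp only [signedOdd, pow_add, ← two_mul, pow_mul] <;> norm_num <;> omega

section
variable {n : ℕ} {F : Type*} [Field F]

theorem jordanBlock_pow_apply (m : ℕ) (i j : Fin n) :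
    (jordanBlock n F ^ m) i j = if (i : ℕ) + m = j then 1 else 0 := by
  induction m generalizing j with
  | zero => simp [one_apply, Fin.ext_iff]
  | succ m ih =>
    simp only [pow_succ, mul_apply, ih]
    simp only [jordanBlock, of_apply, ite_mul, one_mul, zero_mul, Fin.sum_ite_val_eq]
    split_ifs <;> first | rfl | omega

theorem jordanBlock_pow_mul_diagonal_mul_pow_apply (f : ℕ → F) (m p : ℕ) (a b : Fin n) :
    (jordanBlock n F ^ m * diagonal (fun i : Fin n => f i) * jordanBlock n F ^ p) a b =
      if (a : ℕ) + m + p = b then f (a + m) else 0 := by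
  rw [mul_assoc, mul_apply]
  simp only [diagonal_mul, jordanBlock_pow_apply, ite_mul, one_mul, zero_mul, Fin.sum_ite_val_eq]
  simp only [mul_ite, mul_one, mul_zero]
  split_ifs <;> first | rfl | omega

theorem sum_choose_smul_jordanBlock_pow_mul_diagonal_mul_pow_apply (f : ℕ → F) (k : ℕ)
    (a b : Fin n) :
    (∑ i ∈ range (k + 1), (k.choose i : F) •
        (jordanBlock n F ^ (k - i) * diagonal (fun i : Fin n => f i) * jordanBlock n F ^ i)) a b =
      if (a : ℕ) + k = b then ∑ i ∈ range (k + 1), (k.choose i : F) * f (a + i) else 0 := by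
  simp only [Matrix.sum_apply, Matrix.smul_apply, jordanBlock_pow_mul_diagonal_mul_pow_apply,
    smul_eq_mul]
  split_ifs with hab
  · rw [← sum_range_reflect]
    refine sum_congr rfl fun i hi => ?_
    have hik : i ≤ k := Nat.lt_succ_iff.1 (mem_range.1 hi)
    rw [Nat.add_sub_cancel, if_pos (by omega), Nat.choose_symm hik, Nat.sub_sub_self hik]
  · exact sum_eq_zero fun i hi => by rw [if_neg (by simp at hi; omega), mul_zero]

end

theorem eq_zero_of_binomial_relation {n : ℕ} {F : Type*} [Field F] [CharZero F]
    (B : Matrix (Fin n) (Fin n) F) (k : ℕ) (hk : 2 ≤ k)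
    (h : ∀ X : Matrix (Fin n) (Fin n) F,
      (∑ i ∈ Finset.range (k + 1),
        (k.choose i : F) • ((jordanBlock n F) ^ (k - i) * X * (jordanBlock n F) ^ i)) = 0 →
      (∑ i ∈ Finset.range (k + 1), (k.choose i : F) • (X ^ (k - i) * B * X ^ i)) = 0) :
    B = 0 := by
  have hX := h (diagonal fun i => (signedOdd i : F)) <| by
    ext a b
    rw [sum_choose_smul_jordanBlock_pow_mul_diagonal_mul_pow_apply (fun j => (signedOdd j : F)),
      Matrix.zero_apply, ite_eq_right_iff]
    intro
    exact_mod_cast sum_choose_mul_signedOdd_add hk a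
  ext a b
  have hab := congr_fun₂ hX a b
  rw [sum_choose_smul_diagonal_pow_mul_mul_diagonal_pow_apply, Matrix.zero_apply] at hab
  have hd : (signedOdd a + signedOdd b : F) ≠ 0 := by
    exact_mod_cast signedOdd_add_signedOdd_ne_zero a b
  exact (mul_eq_zero.1 hab).resolve_left (pow_ne_zero k hd)
end

section
/- Let F be a field of characteristic zero, let k ≥ 2 be an integer, and let A = Jₙ(0). If B ∈ Mₙ(F) satisfies Ker Ad_A^k = Ann_k(B), then B is a scalar matrix. -/
/-- The adjoint map `Ad_A : X ↦ AX - XA`. -/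
def adFun {n : ℕ} {F : Type*} [Field F] (A : Matrix (Fin n) (Fin n) F) :
    Matrix (Fin n) (Fin n) F → Matrix (Fin n) (Fin n) F :=
  fun X => A * X - X * A

/-- The kernel of the `k`-fold composition of `Ad_A`. -/
def kerAdPow {n : ℕ} {F : Type*} [Field F] (A : Matrix (Fin n) (Fin n) F) (k : ℕ) :
    Set (Matrix (Fin n) (Fin n) F) :=
  {X | (adFun A)^[k] X = 0}

/-- The `k`-th annihilator of `B`: all `X` with `Ad_X^k (B) = 0`. -/
def annPow {n : ℕ} {F : Type*} [Field F] (B : Matrix (Fin n) (Fin n) F) (k : ℕ) :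
    Set (Matrix (Fin n) (Fin n) F) :=
  {X | (adFun X)^[k] B = 0}

/-!
For `D = diag(0, 1, …, n - 1)` one has `[J, D] = J`, so `Ad_J² D = 0` and `D ∈ Ker Ad_J^k = Ann_k(B)`.
Since `Ad_D` multiplies the `(i, j)` entry by `i - j`, this forces `B = diag b`. Then
`[E_pq, B] = (b_q - b_p) E_pq`, so every `E_pq` lies in `Ann_k(B) = Ker Ad_J^k`; the latter is a
subspace, hence contains `X = E_pq + E_qp`. Now `Ad_X B = (b_q - b_p) (E_pq - E_qp)`, and `Ad_X²`
acts on `E_pq - E_qp` as multiplication by `4`, so `Ad_X^k B = 0` forces `b_p = b_q`.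
-/

open Matrix LieAlgebra

attribute [local instance] LieRing.ofAssociativeRing

theorem Module.End.eq_zero_of_pow_apply_eq_zero_of_sq_apply_eq_smul {K V : Type*} [Field K]
    [AddCommGroup V] [Module K V] {f : Module.End K V} {v : V} {c : K} (hc : c ≠ 0)
    (hf : (f ^ 2) v = c • v) {m : ℕ} (hm : (f ^ m) v = 0) : v = 0 := by
  have hsq (j : ℕ) : ((f ^ 2) ^ j) v = c ^ j • v := by
    induction j with
    | zero => simp
    | succ j ih => rw [pow_succ, Module.End.mul_apply, hf, map_smul, ih, smul_smul, pow_succ']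
  have hzero : ((f ^ 2) ^ m) v = 0 := by
    rw [← pow_mul]
    exact Module.End.pow_map_zero_of_le (by omega) hm
  rw [hsq] at hzero
  exact (smul_eq_zero.mp hzero).resolve_left (pow_ne_zero _ hc)

theorem LieAlgebra.ad_pow_apply_eq_zero_of_lie_eq_smul {R L : Type*} [CommRing R] [LieRing L]
    [LieAlgebra R L] {x y : L} {c : R} (h : ⁅x, y⁆ = c • x) {k : ℕ} (hk : 2 ≤ k) :
    (ad R L x ^ k) y = 0 := by
  refine Module.End.pow_map_zero_of_le hk ?_
  rw [pow_two, Module.End.mul_apply, ad_apply, ad_apply, h, lie_smul, lie_self, smul_zero]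

namespace Matrix

variable {ι R : Type*} [Fintype ι] [DecidableEq ι] [CommRing R]

theorem ad_diagonal_pow_apply (d : ι → R) (B : Matrix ι ι R) (m : ℕ) (i j : ι) :
    (ad R _ (diagonal d) ^ m) B i j = (d i - d j) ^ m * B i j := by
  induction m with
  | zero => simp
  | succ m ih =>
    rw [pow_succ', Module.End.mul_apply, ad_apply, Ring.lie_def, sub_apply, diagonal_mul,
      mul_diagonal, ih]
    ring

theorem isDiag_of_ad_diagonal_pow_apply_eq_zero [NoZeroDivisors R] {d : ι → R}
    (hd : Function.Injective d) {B : Matrix ι ι R} {k : ℕ}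
    (h : (ad R _ (diagonal d) ^ k) B = 0) : B.IsDiag := by
  intro i j hij
  have hij' : (d i - d j) ^ k * B i j = 0 := by
    rw [← ad_diagonal_pow_apply, h, zero_apply]
  exact (mul_eq_zero.mp hij').resolve_left (pow_ne_zero _ (sub_ne_zero.mpr (hd.ne hij)))

theorem lie_single_diagonal (p q : ι) (c : R) (b : ι → R) :
    ⁅single p q c, diagonal b⁆ = (b q - b p) • single p q c := by
  ext i j
  rw [Ring.lie_def, sub_apply, mul_diagonal, diagonal_mul, smul_apply, single_apply]
  split_ifs with hpq
  · obtain ⟨rfl, rfl⟩ := hpq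
    simp only [smul_eq_mul]
    ring
  · simp

theorem ad_swap_sq_apply {p q : ι} (hpq : p ≠ q) :
    (ad R _ (single p q (1 : R) + single q p 1) ^ 2) (single p q 1 - single q p 1) =
      (4 : R) • (single p q 1 - single q p 1) := by
  rw [pow_two, Module.End.mul_apply, ad_apply, ad_apply]
  simp only [Ring.lie_def, mul_add, add_mul, mul_sub, sub_mul, single_mul_single_same,
    single_mul_single_of_ne _ _ _ _ hpq, single_mul_single_of_ne _ _ _ _ hpq.symm, mul_one]
  module

theorem eq_of_ad_swap_pow_diagonal_eq_zero {K : Type*} [Field K] [NeZero (2 : K)] {p q : ι}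
    (hpq : p ≠ q) {b : ι → K} {k : ℕ}
    (h : (ad K _ (single p q (1 : K) + single q p 1) ^ k) (diagonal b) = 0) : b p = b q := by
  set X := single p q (1 : K) + single q p 1
  set S := single p q (1 : K) - single q p 1
  have hS : S ≠ 0 := fun hS ↦ by simpa [S, hpq] using congr_fun₂ hS p q
  have hXb : ⁅X, diagonal b⁆ = (b q - b p) • S := by
    rw [add_lie, lie_single_diagonal, lie_single_diagonal]
    module
  have hXS : (b q - b p) • (ad K _ X ^ k) S = 0 := by
    rw [← map_smul, ← hXb, ← ad_apply K, ← Module.End.mul_apply, ← pow_succ]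
    exact Module.End.pow_map_zero_of_le k.le_succ h
  have h4 : (4 : K) ≠ 0 := by
    rw [show (4 : K) = 2 ^ 2 by norm_num]
    exact pow_ne_zero 2 two_ne_zero
  rcases smul_eq_zero.mp hXS with hb | hXS
  · exact (sub_eq_zero.mp hb).symm
  · exact absurd (Module.End.eq_zero_of_pow_apply_eq_zero_of_sq_apply_eq_smul h4
      (ad_swap_sq_apply hpq) hXS) hS

end Matrix

section adFun

variable {n : ℕ} {F : Type*} [Field F]

theorem adFun_eq_ad (A : Matrix (Fin n) (Fin n) F) : adFun A = ad F _ A := by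
  ext X : 1
  rw [ad_apply, Ring.lie_def]
  rfl

theorem iterate_adFun (A : Matrix (Fin n) (Fin n) F) (k : ℕ) :
    (adFun A)^[k] = ⇑(ad F _ A ^ k) := by
  rw [adFun_eq_ad, Module.End.coe_pow]

theorem kerAdPow_eq_ker (A : Matrix (Fin n) (Fin n) F) (k : ℕ) :
    kerAdPow A k = LinearMap.ker (ad F _ A ^ k) := by
  ext X
  rw [kerAdPow, Set.mem_ofPred_eq, iterate_adFun]
  rfl

theorem mem_annPow_iff {B X : Matrix (Fin n) (Fin n) F} {k : ℕ} :
    X ∈ annPow B k ↔ (ad F _ X ^ k) B = 0 := by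
  rw [annPow, Set.mem_ofPred_eq, iterate_adFun]

variable (n F)

theorem lie_jordanBlock_diagonal_val :
    ⁅jordanBlock n F, diagonal (fun i : Fin n ↦ ((i : ℕ) : F))⁆ = jordanBlock n F := by
  ext i j
  rw [Ring.lie_def, Matrix.sub_apply, mul_diagonal, diagonal_mul, jordanBlock, of_apply]
  split_ifs with hij
  · rw [← hij, Nat.cast_succ]
    ring
  · ring

end adFun

theorem isScalar_of_kerAdPow_jordan_eq_annPow {n : ℕ} {F : Type*} [Field F] [CharZero F]
    (k : ℕ) (hk : 2 ≤ k) (B : Matrix (Fin n) (Fin n) F)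
    (h : kerAdPow (jordanBlock n F) k = annPow B k) :
    ∃ c : F, B = c • (1 : Matrix (Fin n) (Fin n) F) := by
  have hD : diagonal (fun i : Fin n ↦ ((i : ℕ) : F)) ∈ annPow B k := by
    rw [← h, kerAdPow_eq_ker]
    refine ad_pow_apply_eq_zero_of_lie_eq_smul (c := 1) ?_ hk
    rw [one_smul, lie_jordanBlock_diagonal_val]
  obtain ⟨b, rfl⟩ : ∃ b, B = diagonal b :=
    ⟨B.diag, (isDiag_of_ad_diagonal_pow_apply_eq_zero
      (Nat.cast_injective.comp Fin.val_injective) (mem_annPow_iff.mp hD)).diagonal_diag.symm⟩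
  have hsingle (p q : Fin n) :
      single p q (1 : F) ∈ LinearMap.ker (ad F _ (jordanBlock n F) ^ k) := by
    rw [← SetLike.mem_coe, ← kerAdPow_eq_ker, h, mem_annPow_iff]
    exact ad_pow_apply_eq_zero_of_lie_eq_smul (lie_single_diagonal p q 1 b) hk
  obtain ⟨c, hc⟩ := mem_range_scalar_of_commute_single (M := diagonal b) fun p q hpq ↦ by
    have hswap := add_mem (hsingle p q) (hsingle q p)
    rw [← SetLike.mem_coe, ← kerAdPow_eq_ker, h, mem_annPow_iff] at hswap
    refine commute_iff_lie_eq.mpr ?_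
    rw [lie_single_diagonal, eq_of_ad_swap_pow_diagonal_eq_zero hpq hswap, sub_self, zero_smul]
  exact ⟨c, by rw [← hc, scalar_apply, smul_one_eq_diagonal]⟩
end

section
/- Let F be a field of characteristic zero and let A, B ∈ Mₙ(F). If A and B are polynomially equivalent, then for every positive integer k, Ker Ad_A^k = Ker Ad_B^k. -/
/-!
Write `Ad_A = L_A - R_A` with `L_A`, `R_A` the (commuting) left and right multiplications by `A`.
Then `Ad_{f(A)} = f(L_A) - f(R_A)`, and since `x - y` divides `f(x) - f(y)` in any commutative
ring, `Ad_{f(A)}^k = C ∘ Ad_A^k` for some operator `C`. Hence `Ker Ad_A^k ⊆ Ker Ad_{f(A)}^k`, and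
polynomial equivalence gives both inclusions.
-/

open Polynomial LinearMap

section Algebra

variable {F R : Type*} [CommRing F] [Ring R] [Algebra F R]

open scoped IsMulCommutative in
theorem Commute.exists_pow_aeval_sub_aeval_eq_mul {a b : R} (hab : Commute a b) (f : F[X])
    (k : ℕ) : ∃ c : R, (aeval a f - aeval b f) ^ k = c * (a - b) ^ k := by
  let S := Algebra.adjoin F {a, b}
  have : IsMulCommutative S := Algebra.isMulCommutative_adjoin F <| by
    rintro _ (rfl | rfl) _ (rfl | rfl) <;> first | rfl | exact hab.eq | exact hab.symm.eq
  let a' : S := ⟨a, Algebra.subset_adjoin (by simp)⟩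
  let b' : S := ⟨b, Algebra.subset_adjoin (by simp)⟩
  obtain ⟨c, hc⟩ := pow_dvd_pow_of_dvd (sub_dvd_eval_sub a' b' (f.map (algebraMap F S))) k
  refine ⟨c, ?_⟩
  simpa [mul_comm, eval_map_algebraMap, aeval_subalgebra_coe] using congrArg Subtype.val hc

theorem Module.End.ker_pow_sub_le_ker_pow_aeval_sub {M : Type*} [AddCommGroup M] [Module F M]
    {l r : Module.End F M} (hlr : Commute l r) (f : F[X]) (k : ℕ) :
    ker ((l - r) ^ k) ≤ ker ((aeval l f - aeval r f) ^ k) := by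
  obtain ⟨c, hc⟩ := hlr.exists_pow_aeval_sub_aeval_eq_mul f k
  rw [hc, Module.End.mul_eq_comp]
  exact ker_le_ker_comp _ _

theorem mulLeft_aeval (a : R) (f : F[X]) : mulLeft F (aeval a f) = aeval (mulLeft F a) f :=
  (aeval_algHom_apply (Algebra.lmul F R) a f).symm

theorem mulRight_aeval (a : R) (f : F[X]) : mulRight F (aeval a f) = aeval (mulRight F a) f := by
  induction f using Polynomial.induction_on' with
  | add p q hp hq => ext x; simp [← hp, ← hq, mul_add]
  | monomial i r => ext x; simp [aeval_monomial, ← Algebra.smul_def, pow_mulRight]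

theorem ker_pow_mulLeft_sub_mulRight_le_aeval (a : R) (f : F[X]) (k : ℕ) :
    ker ((mulLeft F a - mulRight F a) ^ k) ≤
      ker ((mulLeft F (aeval a f) - mulRight F (aeval a f)) ^ k) := by
  rw [mulLeft_aeval, mulRight_aeval]
  exact Module.End.ker_pow_sub_le_ker_pow_aeval_sub (commute_mulLeft_right a a) f k

end Algebra

theorem kerAdPow_eq_ker_pow_mulLeft_sub_mulRight {n : ℕ} {F : Type*} [Field F]
    (A : Matrix (Fin n) (Fin n) F) (k : ℕ) :
    kerAdPow A k = ker ((mulLeft F A - mulRight F A) ^ k) := by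
  have : adFun A = ⇑(mulLeft F A - mulRight F A) := rfl
  ext X
  simp [kerAdPow, this, Module.End.coe_pow]

theorem kerAdPow_subset_kerAdPow_aeval {n : ℕ} {F : Type*} [Field F]
    (A : Matrix (Fin n) (Fin n) F) (f : F[X]) (k : ℕ) :
    kerAdPow A k ⊆ kerAdPow (aeval A f) k := by
  simp only [kerAdPow_eq_ker_pow_mulLeft_sub_mulRight]
  exact ker_pow_mulLeft_sub_mulRight_le_aeval A f k

theorem kerAdPow_eq_of_polyEquiv_general {n : ℕ} {F : Type*} [Field F]
    (A B : Matrix (Fin n) (Fin n) F) (h : PolyEquiv A B) :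
    ∀ k : ℕ, 0 < k → kerAdPow A k = kerAdPow B k := by
  obtain ⟨f, g, hf, hg⟩ := h
  intro k _
  exact (hf ▸ kerAdPow_subset_kerAdPow_aeval A f k).antisymm
    (hg ▸ kerAdPow_subset_kerAdPow_aeval B g k)

theorem kerAdPow_eq_of_polyEquiv {n : ℕ} {F : Type*} [Field F] [CharZero F]
    (A B : Matrix (Fin n) (Fin n) F) (h : PolyEquiv A B) :
    ∀ k : ℕ, 0 < k → kerAdPow A k = kerAdPow B k :=
  kerAdPow_eq_of_polyEquiv_general A B h
end
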